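/- arXiv:math/0503471 — 3 statements merged into one kernel-verified Lean document; each statement's English description precedes it below -/
import Mathlib

section
/- Fix n ≥ 2, U ∈ U(n-1), a ∈ ℂ^{n-1}, β ∈ ℝ. The map g(z', z_n) = (Uz' + a, e^{iβ} exp(2⟨Uz', a⟩ + |a|²) z_n) maps the hypersurface δ = {(z', z_n) ∈ ℂ^{n-1} × ℂ : |z_n| = exp(|z'|²)} bijectively onto itself. -/
/-!
The map is a shear `(z', w) ↦ (φ z', c z' * w)` of `ℂ^{n-1} × ℂ` whose base map
`φ z' = U z' + a` is bijective and whose fibre factor never vanishes, so it is a bijection of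
`ℂ^{n-1} × ℂ`. Expanding `‖U z' + a‖² = ‖z'‖² + 2 Re ⟨a, U z'⟩ + ‖a‖²` shows
`|c z'| = exp (‖φ z'‖² - ‖z'‖²)`, so `|w| = exp ‖z'‖²` holds exactly when
`|c z' * w| = exp ‖φ z'‖²`: the hypersurface is the full preimage of itself.
-/

open Complex

theorem Set.bijOn_prod_mul_of_norm_eq_exp_sub {E F : Type*} (φ : E → F) (hφ : φ.Bijective)
    (c : E → ℂ) (f : E → ℝ) (g : F → ℝ) (hc : ∀ z, ‖c z‖ = Real.exp (g (φ z) - f z)) :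
    Set.BijOn (fun p : E × ℂ => (φ p.1, c p.1 * p.2))
      {p | ‖p.2‖ = Real.exp (f p.1)} {p | ‖p.2‖ = Real.exp (g p.1)} := by
  have hc₀ z : c z ≠ 0 := norm_pos_iff.mp (hc z ▸ Real.exp_pos _)
  refine (Equiv.prodShear (.ofBijective φ hφ) fun z => .mulLeft₀ (c z) (hc₀ z)).bijOn
    fun ⟨z, w⟩ => ?_
  have hsplit : Real.exp (g (φ z)) = Real.exp (g (φ z) - f z) * Real.exp (f z) := by
    rw [← Real.exp_add, sub_add_cancel]
  change ‖c z * w‖ = Real.exp (g (φ z)) ↔ ‖w‖ = Real.exp (f z)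
  rw [norm_mul, hc, hsplit]
  exact mul_right_inj' (Real.exp_pos _).ne'

theorem norm_exp_two_inner_add_norm_sq {E : Type*} [NormedAddCommGroup E]
    [InnerProductSpace ℂ E] (a v : E) :
    ‖exp (2 * inner ℂ a v + (‖a‖ : ℂ) ^ 2)‖ = Real.exp (‖v + a‖ ^ 2 - ‖v‖ ^ 2) := by
  rw [norm_exp, norm_add_sq (𝕜 := ℂ), inner_re_symm]
  congr 1
  simp [← ofReal_pow]
  ring

namespace Matrix.UnitaryGroup

variable {n 𝕜 : Type*} [Fintype n] [DecidableEq n] [RCLike 𝕜]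

noncomputable def toEuclideanLinearIsometryEquiv (U : unitaryGroup n 𝕜) :
    EuclideanSpace 𝕜 n ≃ₗᵢ[𝕜] EuclideanSpace 𝕜 n :=
  Unitary.linearIsometryEquiv ⟨toEuclideanCLM (n := n) (𝕜 := 𝕜) U, Unitary.map_mem _ U.2⟩

theorem coe_toEuclideanLinearIsometryEquiv (U : unitaryGroup n 𝕜) :
    ⇑(toEuclideanLinearIsometryEquiv U) = toEuclideanLin (U : Matrix n n 𝕜) :=
  rfl

end Matrix.UnitaryGroup

theorem stmt_7_general (n : ℕ)
    (U : Matrix.unitaryGroup (Fin (n - 1)) ℂ)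
    (a : EuclideanSpace ℂ (Fin (n - 1))) (β : ℝ) :
    Set.BijOn
      (fun p : EuclideanSpace ℂ (Fin (n - 1)) × ℂ =>
        ((Matrix.toEuclideanLin (U : Matrix (Fin (n - 1)) (Fin (n - 1)) ℂ) p.1) + a,
          Complex.exp ((β : ℂ) * Complex.I)
            * Complex.exp (2 * (inner ℂ a (Matrix.toEuclideanLin (U : Matrix (Fin (n - 1)) (Fin (n - 1)) ℂ) p.1) : ℂ) + (‖a‖ : ℂ) ^ 2)
            * p.2))
      {p : EuclideanSpace ℂ (Fin (n - 1)) × ℂ | ‖p.2‖ = Real.exp (‖p.1‖ ^ 2)}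
      {p : EuclideanSpace ℂ (Fin (n - 1)) × ℂ | ‖p.2‖ = Real.exp (‖p.1‖ ^ 2)} := by
  rw [← Matrix.UnitaryGroup.coe_toEuclideanLinearIsometryEquiv]
  set T := Matrix.UnitaryGroup.toEuclideanLinearIsometryEquiv U
  refine Set.bijOn_prod_mul_of_norm_eq_exp_sub (fun z => T z + a)
    ((Equiv.addRight a).bijective.comp T.bijective)
    (fun z => exp (β * I) * exp (2 * inner ℂ a (T z) + (‖a‖ : ℂ) ^ 2)) (‖·‖ ^ 2) (‖·‖ ^ 2)
    fun z => ?_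
  rw [norm_mul, norm_exp_ofReal_mul_I, one_mul, norm_exp_two_inner_add_norm_sq, T.norm_map]

theorem stmt_7 (n : ℕ) (hn : 2 ≤ n)
    (U : Matrix.unitaryGroup (Fin (n - 1)) ℂ)
    (a : EuclideanSpace ℂ (Fin (n - 1))) (β : ℝ) :
    Set.BijOn
      (fun p : EuclideanSpace ℂ (Fin (n - 1)) × ℂ =>
        ((Matrix.toEuclideanLin (U : Matrix (Fin (n - 1)) (Fin (n - 1)) ℂ) p.1) + a,
          Complex.exp ((β : ℂ) * Complex.I)
            * Complex.exp (2 * (inner ℂ a (Matrix.toEuclideanLin (U : Matrix (Fin (n - 1)) (Fin (n - 1)) ℂ) p.1) : ℂ) + (‖a‖ : ℂ) ^ 2)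
            * p.2))
      {p : EuclideanSpace ℂ (Fin (n - 1)) × ℂ | ‖p.2‖ = Real.exp (‖p.1‖ ^ 2)}
      {p : EuclideanSpace ℂ (Fin (n - 1)) × ℂ | ‖p.2‖ = Real.exp (‖p.1‖ ^ 2)} :=
  stmt_7_general n U a β
end

section
/- For any real α, β, γ, δ, the holomorphic vector field Z_{α,β,γ,δ} on ℂ⁴ with components Z₁ = α(w₁²-w₂²-w₃²+w₄²) + 2(βw₁w₂ + γw₁w₃ + δw₁w₄), Z₂ = β(-w₁²+w₂²-w₃²+w₄²) + 2(αw₁w₂ + γw₂w₃ + δw₂w₄), Z₃ = γ(-w₁²-w₂²+w₃²+w₄²) + 2(αw₁w₃ + βw₂w₃ + δw₃w₄), Z₄ = δ(w₁²+w₂²+w₃²+w₄²) + 2(αw₁w₄ + βw₂w₄ + γw₃w₄) is tangent along the smooth part of the boundary hypersurface {(Im w₁)² + (Im w₂)² + (Im w₃)² = (Im w₄)²} to that hypersurface, i.e. the real part of the derivative of ρ(w) = (Im w₁)² + (Im w₂)² + (Im w₃)² - (Im w₄)² along Z vanishes at every point where ρ = 0. -/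
open Complex

theorem stmt_11 (α β γ δ : ℝ) (w₁ w₂ w₃ w₄ : ℂ)
    (hρ : w₁.im ^ 2 + w₂.im ^ 2 + w₃.im ^ 2 - w₄.im ^ 2 = 0) :
    let Z₁ : ℂ := (α : ℂ) * (w₁ ^ 2 - w₂ ^ 2 - w₃ ^ 2 + w₄ ^ 2)
      + 2 * ((β : ℂ) * w₁ * w₂ + (γ : ℂ) * w₁ * w₃ + (δ : ℂ) * w₁ * w₄)
    let Z₂ : ℂ := (β : ℂ) * (-w₁ ^ 2 + w₂ ^ 2 - w₃ ^ 2 + w₄ ^ 2)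
      + 2 * ((α : ℂ) * w₁ * w₂ + (γ : ℂ) * w₂ * w₃ + (δ : ℂ) * w₂ * w₄)
    let Z₃ : ℂ := (γ : ℂ) * (-w₁ ^ 2 - w₂ ^ 2 + w₃ ^ 2 + w₄ ^ 2)
      + 2 * ((α : ℂ) * w₁ * w₃ + (β : ℂ) * w₂ * w₃ + (δ : ℂ) * w₃ * w₄)
    let Z₄ : ℂ := (δ : ℂ) * (w₁ ^ 2 + w₂ ^ 2 + w₃ ^ 2 + w₄ ^ 2)
      + 2 * ((α : ℂ) * w₁ * w₄ + (β : ℂ) * w₂ * w₄ + (γ : ℂ) * w₃ * w₄)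
    w₁.im * Z₁.im + w₂.im * Z₂.im + w₃.im * Z₃.im - w₄.im * Z₄.im = 0 := by
  intro Z₁ Z₂ Z₃ Z₄
  simp only [Z₁, Z₂, Z₃, Z₄, add_im, mul_im, sub_im, neg_im, ofReal_re, ofReal_im,
    sq, mul_re, sub_re, add_re, neg_re, Complex.re_ofNat, Complex.im_ofNat]
  linear_combination (2*(α*w₁.re + β*w₂.re + γ*w₃.re + δ*w₄.re)) * hρ
end

section
/- The domain Ω₁ = {(z,w) ∈ ℂ² : |z|² + |w|² - 1 < |z² + w² - 1|} is contained in the product domain {(z,w) ∈ ℂ² : z ∉ (-∞,-1] ∪ [1,∞) and w ∉ (-∞,-1] ∪ [1,∞)}, where the excluded sets are real intervals on the real axis in ℂ. -/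
open Complex

lemma norm_sq_sub_one_of_im_eq_zero {z : ℂ} (hz : z.im = 0) (h1 : 1 ≤ |z.re|) :
    ‖z ^ 2 - 1‖ = ‖z‖ ^ 2 - 1 := by
  have hzre : z = (z.re : ℂ) := Complex.ext rfl (by simp [hz])
  have hsq : 1 ≤ z.re ^ 2 := by nlinarith [sq_abs z.re, abs_nonneg z.re]
  rw [hzre, norm_real, Real.norm_eq_abs, sq_abs, ← abs_of_nonneg (sub_nonneg.2 hsq)]
  norm_cast

lemma norm_sq_add_sq_sub_one_le_of_im_eq_zero {z : ℂ} (w : ℂ) (hz : z.im = 0)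
    (h1 : 1 ≤ |z.re|) : ‖z ^ 2 + w ^ 2 - 1‖ ≤ ‖z‖ ^ 2 + ‖w‖ ^ 2 - 1 :=
  calc ‖z ^ 2 + w ^ 2 - 1‖ = ‖(z ^ 2 - 1) + w ^ 2‖ := by ring_nf
    _ ≤ ‖z ^ 2 - 1‖ + ‖w ^ 2‖ := norm_add_le _ _
    _ = ‖z‖ ^ 2 + ‖w‖ ^ 2 - 1 := by
      rw [norm_sq_sub_one_of_im_eq_zero hz h1, norm_pow]; ring

lemma abs_re_lt_one_of_norm_lt {z w : ℂ}
    (h : ‖z‖ ^ 2 + ‖w‖ ^ 2 - 1 < ‖z ^ 2 + w ^ 2 - 1‖) (hz : z.im = 0) : |z.re| < 1 := by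
  by_contra! h1
  exact (norm_sq_add_sq_sub_one_le_of_im_eq_zero w hz h1).not_gt h

theorem stmt_16 (z w : ℂ)
    (h : ‖z‖ ^ 2 + ‖w‖ ^ 2 - 1
        < ‖z ^ 2 + w ^ 2 - 1‖) :
    (z.im = 0 → |z.re| < 1) ∧ (w.im = 0 → |w.re| < 1) := by
  refine ⟨abs_re_lt_one_of_norm_lt h, abs_re_lt_one_of_norm_lt (w := z) ?_⟩
  rwa [add_comm (‖w‖ ^ 2), add_comm (w ^ 2)]
end
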